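/- Let G be a group, M a submonoid of G, and Δ ∈ M. Assume there exists an integer k ≥ 1 such that Δ^k lies in the center of G, and that for every c ∈ G there exists an integer r ≥ 0 such that Δ^{k r} * c ∈ M. Then for every a ∈ G, the centralizer Z(a) is generated, as a subgroup of G, by the set Z(a) ∩ M; that is, Z(a) equals the subgroup generated by its 'positive' elements (those lying in M). -/
import Mathlib


/-- Let `M` be a submonoid of a group `G` and `Δ ∈ M`. If some power
`Δ^k` (`k ≥ 1`) is central in `G`, and every `c ∈ G` becomes an element of `M` after
multiplication by a suitable power `Δ^(k*r)` (`r ≥ 0`), then for every `a ∈ G` the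
centralizer `Z(a)` is generated by its positive elements, i.e. by `Z(a) ∩ M`. -/
theorem centralizer_generated_by_positive_elements (G : Type*) [Group G]
    (M : Submonoid G) (Δ : G) (hΔ : Δ ∈ M) (k : ℕ) (hk : 1 ≤ k)
    (hcentral : Δ ^ k ∈ Subgroup.center G)
    (hpos : ∀ c : G, ∃ r : ℕ, Δ ^ (k * r) * c ∈ M) (a : G) :
    Subgroup.centralizer {a} =
      Subgroup.closure ((Subgroup.centralizer {a} : Set G) ∩ (M : Set G)) := by
  apply le_antisymm
  · intro g hg
    obtain ⟨r, hr⟩ := hpos g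
    have hDcen : Δ ^ (k * r) ∈ Subgroup.center G := by
      rw [pow_mul]; exact Subgroup.pow_mem _ hcentral r
    have hDM : Δ ^ (k * r) ∈ M := pow_mem hΔ _
    have hD : Δ ^ (k * r) ∈ Subgroup.centralizer ({a} : Set G) :=
      Subgroup.center_le_centralizer _ hDcen
    have hgcen : Δ ^ (k * r) * g ∈ Subgroup.centralizer ({a} : Set G) :=
      mul_mem hD hg
    have h1 : Δ ^ (k * r) ∈
        Subgroup.closure ((Subgroup.centralizer {a} : Set G) ∩ (M : Set G)) :=
      Subgroup.subset_closure ⟨hD, hDM⟩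
    have h2 : Δ ^ (k * r) * g ∈
        Subgroup.closure ((Subgroup.centralizer {a} : Set G) ∩ (M : Set G)) :=
      Subgroup.subset_closure ⟨hgcen, hr⟩
    have := mul_mem (inv_mem h1) h2
    rwa [inv_mul_cancel_left] at this
  · rw [Subgroup.closure_le]
    exact Set.inter_subset_left
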